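/- arXiv:1807.08334 — 7 statements merged into one kernel-verified Lean document; each statement's English description precedes it below -/
import Mathlib

section
/- If G is a connected graph with diameter D and edge metric dimension k, then the number of edges of G is at most (D-c)^k + k·∑_{i=0}^{c} (2i+2)^{k-1}, where c = ⌈D/3⌉ - 1; equivalently |E(G)| ≤ (⌊2D/3⌋+1)^k + k·∑_{i=1}^{⌈D/3⌉}(2i)^{k-1}. -/
/-!
Fix an edge resolving set `S` with `|S| = k` and a threshold `c`. An edge whose distances to all
of `S` are at least `c` has its distance vector in `[c, D]^S`, so there are at most
`(D + 1 - c)^k` of them. Every other edge lies at some distance `i < c` from some `s ∈ S`; for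
such edges the triangle inequality confines the distance to any other `t ∈ S` to the `2i + 2` values
`d(s, t) - i - 1, …, d(s, t) + i`, and since the vectors are distinct there are at most
`(2i + 2)^(k-1)` of them. Take `c = ⌈D/3⌉`.
-/

open SimpleGraph Finset

/-- Distance from an edge (as an unordered pair) to a vertex: the minimum
of the distances from the two endpoints. -/
noncomputable def edgeVertexDist {V : Type*} (G : SimpleGraph V) (e : Sym2 V) (v : V) : ℕ :=
  Sym2.lift ⟨fun x y => min (G.dist x v) (G.dist y v), fun x y => by
    simp [min_comm]⟩ e

/-- `S` is a resolving set for the vertices of `G`. -/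
def IsResolvingSet {V : Type*} (G : SimpleGraph V) (S : Set V) : Prop :=
  ∀ u w : V, (∀ s ∈ S, G.dist u s = G.dist w s) → u = w

/-- `S` is a resolving set for the edges of `G`. -/
def IsEdgeResolvingSet {V : Type*} (G : SimpleGraph V) (S : Set V) : Prop :=
  ∀ e ∈ G.edgeSet, ∀ f ∈ G.edgeSet,
    (∀ s ∈ S, edgeVertexDist G e s = edgeVertexDist G f s) → e = f

/-- The metric dimension of `G`. -/
noncomputable def metricDim {V : Type*} (G : SimpleGraph V) : ℕ :=
  sInf {k | ∃ S : Finset V, S.card = k ∧ IsResolvingSet G (S : Set V)}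

/-- The edge metric dimension of `G`. -/
noncomputable def edgeMetricDim {V : Type*} (G : SimpleGraph V) : ℕ :=
  sInf {k | ∃ S : Finset V, S.card = k ∧ IsEdgeResolvingSet G (S : Set V)}

section EdgeResolving

variable {V : Type*} {G : SimpleGraph V}

@[simp]
lemma edgeVertexDist_mk (x y v : V) :
    edgeVertexDist G s(x, y) v = min (G.dist x v) (G.dist y v) := rfl

lemma edgeVertexDist_le_diam (h : G.ediam ≠ ⊤) (e : Sym2 V) (v : V) :
    edgeVertexDist G e v ≤ G.diam := by
  induction e using Sym2.ind with
  | _ x y => exact (min_le_left _ _).trans (G.dist_le_diam h)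

lemma SimpleGraph.Connected.edgeVertexDist_le_add_dist (hG : G.Connected) (e : Sym2 V)
    (s t : V) : edgeVertexDist G e t ≤ edgeVertexDist G e s + G.dist s t := by
  induction e using Sym2.ind with
  | _ x y =>
    have hx : G.dist x t ≤ G.dist x s + G.dist s t := hG.dist_triangle
    have hy : G.dist y t ≤ G.dist y s + G.dist s t := hG.dist_triangle
    simp only [edgeVertexDist_mk]
    omega

lemma SimpleGraph.Connected.dist_le_edgeVertexDist_add (hG : G.Connected) {e : Sym2 V}
    (he : e ∈ G.edgeSet) (s t : V) :
    G.dist s t ≤ edgeVertexDist G e s + edgeVertexDist G e t + 1 := by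
  induction e using Sym2.ind with
  | _ x y =>
    have hxy : G.dist x y = 1 := dist_eq_one_iff_adj.mpr he
    have hyx : G.dist y x = 1 := dist_eq_one_iff_adj.mpr he.symm
    have hx : G.dist s t ≤ G.dist s x + G.dist x t := hG.dist_triangle
    have hy : G.dist s t ≤ G.dist s y + G.dist y t := hG.dist_triangle
    have hsx : G.dist s x = G.dist x s := G.dist_comm
    have hsy : G.dist s y = G.dist y s := G.dist_comm
    have hxy' : G.dist x t ≤ G.dist x y + G.dist y t := hG.dist_triangle
    have hyx' : G.dist y t ≤ G.dist y x + G.dist x t := hG.dist_triangle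
    simp only [edgeVertexDist_mk]
    omega

lemma SimpleGraph.Connected.edgeVertexDist_eq_zero_iff (hG : G.Connected) {e : Sym2 V}
    {v : V} : edgeVertexDist G e v = 0 ↔ v ∈ e := by
  induction e using Sym2.ind with
  | _ x y =>
    rw [edgeVertexDist_mk, Nat.min_eq_zero_iff, hG.dist_eq_zero_iff, hG.dist_eq_zero_iff,
      Sym2.mem_iff, eq_comm (a := x), eq_comm (a := y)]

lemma isEdgeResolvingSet_univ (hG : G.Connected) : IsEdgeResolvingSet G Set.univ := by
  intro e he f _ hef
  induction e using Sym2.ind with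
  | _ x y =>
    have hmem : ∀ v ∈ s(x, y), v ∈ f := fun v hv =>
      hG.edgeVertexDist_eq_zero_iff.mp <|
        (hef v trivial).symm.trans (hG.edgeVertexDist_eq_zero_iff.mpr hv)
    exact ((Sym2.mem_and_mem_iff he.ne).mp ⟨hmem x (by simp), hmem y (by simp)⟩).symm

lemma exists_isEdgeResolvingSet_card_eq_edgeMetricDim [Fintype V] (hG : G.Connected) :
    ∃ S : Finset V, #S = edgeMetricDim G ∧ IsEdgeResolvingSet G (S : Set V) :=
  Nat.sInf_mem (s := {k | ∃ S : Finset V, #S = k ∧ IsEdgeResolvingSet G (S : Set V)})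
    ⟨_, univ, rfl, by simpa using isEdgeResolvingSet_univ hG⟩

namespace IsEdgeResolvingSet

variable [DecidableEq V] {S : Finset V}

lemma card_le_prod (hS : IsEdgeResolvingSet G (S : Set V)) {F : Finset (Sym2 V)}
    (hF : ∀ e ∈ F, e ∈ G.edgeSet) (T : Finset V)
    (hagree : ∀ e ∈ F, ∀ f ∈ F, ∀ s ∈ S, s ∉ T → edgeVertexDist G e s = edgeVertexDist G f s)
    (I : V → Finset ℕ) (hI : ∀ e ∈ F, ∀ t ∈ T, edgeVertexDist G e t ∈ I t) :
    #F ≤ ∏ t ∈ T, #(I t) := by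
  calc #F ≤ #(T.pi I) := by
        refine card_le_card_of_injOn (fun e t _ => edgeVertexDist G e t)
          (fun e he => mem_pi.mpr (hI e he)) fun e he f hf hef => ?_
        refine hS e (hF e he) f (hF f hf) fun s hs => ?_
        by_cases hsT : s ∈ T
        · exact congrFun (congrFun hef s) hsT
        · exact hagree e he f hf s hs hsT
    _ = ∏ t ∈ T, #(I t) := card_pi T I

variable [Fintype V] [DecidableRel G.Adj]

lemma card_filter_le_edgeVertexDist_le (hS : IsEdgeResolvingSet G (S : Set V))
    (hG : G.ediam ≠ ⊤) (c : ℕ) :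
    #{e ∈ G.edgeFinset | ∀ s ∈ S, c ≤ edgeVertexDist G e s} ≤ (G.diam + 1 - c) ^ #S := by
  calc _ ≤ ∏ _t ∈ S, #(Icc c G.diam) :=
        hS.card_le_prod (fun e he => mem_edgeFinset.mp (mem_filter.mp he).1) S
          (fun _ _ _ _ _ hs hsS => absurd hs hsS) (fun _ => Icc c G.diam)
          fun e he t ht => by
            rw [mem_filter] at he
            exact mem_Icc.mpr ⟨he.2 t ht, edgeVertexDist_le_diam hG e t⟩
    _ = (G.diam + 1 - c) ^ #S := by rw [prod_const, Nat.card_Icc]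

lemma card_filter_edgeVertexDist_eq_le (hS : IsEdgeResolvingSet G (S : Set V))
    (hG : G.Connected) {s : V} (hs : s ∈ S) (i : ℕ) :
    #{e ∈ G.edgeFinset | edgeVertexDist G e s = i} ≤ (2 * i + 2) ^ (#S - 1) := by
  set I : V → Finset ℕ := fun t => Icc (G.dist s t - (i + 1)) (G.dist s t + i)
  calc _ ≤ ∏ t ∈ S.erase s, #(I t) := by
        refine hS.card_le_prod (fun e he => mem_edgeFinset.mp (mem_filter.mp he).1) _
          (fun e he f hf u hu hue => ?_) I fun e he t _ => ?_
        · rw [mem_filter] at he hf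
          rw [of_not_not fun h => hue (mem_erase.mpr ⟨h, hu⟩), he.2, hf.2]
        · obtain ⟨he, hes⟩ := mem_filter.mp he
          have h₁ := hG.edgeVertexDist_le_add_dist e s t
          have h₂ := hG.dist_le_edgeVertexDist_add (mem_edgeFinset.mp he) s t
          rw [hes] at h₁ h₂
          exact mem_Icc.mpr ⟨by omega, by omega⟩
    _ ≤ (2 * i + 2) ^ #(S.erase s) :=
        prod_le_pow_card _ _ _ fun t _ => by simp only [I, Nat.card_Icc]; omega
    _ = (2 * i + 2) ^ (#S - 1) := by rw [card_erase_of_mem hs]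

lemma card_edgeFinset_le (hS : IsEdgeResolvingSet G (S : Set V)) (hG : G.Connected) (c : ℕ) :
    #G.edgeFinset ≤ (G.diam + 1 - c) ^ #S + #S * ∑ i ∈ range c, (2 * i + 2) ^ (#S - 1) := by
  have := hG.nonempty
  have hdiam : G.ediam ≠ ⊤ := G.connected_iff_ediam_ne_top.mp hG
  rw [← card_filter_add_card_filter_not (s := G.edgeFinset)
    (fun e => ∀ s ∈ S, c ≤ edgeVertexDist G e s)]
  gcongr
  · exact hS.card_filter_le_edgeVertexDist_le hdiam c
  calc _ ≤ #(S.biUnion fun s => (range c).biUnion fun i =>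
          {e ∈ G.edgeFinset | edgeVertexDist G e s = i}) := by
        refine card_le_card fun e he => ?_
        obtain ⟨he, hnear⟩ := mem_filter.mp he
        push Not at hnear
        obtain ⟨s, hs, hlt⟩ := hnear
        simp only [mem_biUnion, mem_range, mem_filter]
        exact ⟨s, hs, _, hlt, he, rfl⟩
    _ ≤ ∑ s ∈ S, ∑ i ∈ range c, #{e ∈ G.edgeFinset | edgeVertexDist G e s = i} :=
        card_biUnion_le.trans (sum_le_sum fun _ _ => card_biUnion_le)
    _ ≤ ∑ _s ∈ S, ∑ i ∈ range c, (2 * i + 2) ^ (#S - 1) :=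
        sum_le_sum fun _ hs => sum_le_sum fun i _ => hS.card_filter_edgeVertexDist_eq_le hG hs i
    _ = #S * ∑ i ∈ range c, (2 * i + 2) ^ (#S - 1) := by rw [sum_const, smul_eq_mul]

end IsEdgeResolvingSet

end EdgeResolving

lemma sum_Icc_one_eq_sum_range {M : Type*} [AddCommMonoid M] (f : ℕ → M) (n : ℕ) :
    ∑ i ∈ Icc 1 n, f i = ∑ i ∈ range n, f (i + 1) := by
  rw [← Finset.Ico_add_one_right_eq_Icc, sum_Ico_eq_sum_range]
  simp [add_comm]

/-- If `G` is a connected graph with diameter `D` and edge metric dimension `k`,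
then `|E(G)| ≤ (D-c)^k + k·∑_{i=0}^{c} (2i+2)^{k-1}` where `c = ⌈D/3⌉ - 1`;
equivalently `|E(G)| ≤ (⌊2D/3⌋+1)^k + k·∑_{i=1}^{⌈D/3⌉} (2i)^{k-1}`. -/
theorem stmt_0 {V : Type*} [Fintype V] [DecidableEq V] (G : SimpleGraph V)
    [DecidableRel G.Adj] (hG : G.Connected) (D k : ℕ)
    (hD : G.diam = D) (hk : edgeMetricDim G = k) :
    G.edgeFinset.card ≤
        (D - ((D + 2) / 3 - 1)) ^ k +
          k * ∑ i ∈ Finset.range ((D + 2) / 3 - 1 + 1), (2 * i + 2) ^ (k - 1) ∧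
    G.edgeFinset.card ≤
        (2 * D / 3 + 1) ^ k +
          k * ∑ i ∈ Finset.Icc 1 ((D + 2) / 3), (2 * i) ^ (k - 1) := by
  obtain ⟨S, hSk, hS⟩ := exists_isEdgeResolvingSet_card_eq_edgeMetricDim hG
  have hbound := hS.card_edgeFinset_le hG
  rw [hD, hSk, hk] at hbound
  refine ⟨(hbound ((D + 2) / 3 - 1 + 1)).trans_eq ?_, (hbound ((D + 2) / 3)).trans_eq ?_⟩
  · rw [show D + 1 - ((D + 2) / 3 - 1 + 1) = D - ((D + 2) / 3 - 1) by omega]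
  · rw [show D + 1 - (D + 2) / 3 = 2 * D / 3 + 1 by omega, sum_Icc_one_eq_sum_range]
    simp only [mul_add, mul_one]
end

section
/- Let G be a connected graph with edge metric dimension k, and let H be a subgraph of G with diameter D (measured within H). Then |E(H)| ≤ (D+1)^k. -/
open SimpleGraph Finset

lemma univ_isEdgeResolvingSet {V : Type*} [Fintype V] (G : SimpleGraph V)
    (hG : G.Connected) : IsEdgeResolvingSet G ((Finset.univ : Finset V) : Set V) := by
  intro e he f hf h
  induction e using Sym2.ind with | _ a b =>
  induction f using Sym2.ind with | _ c d =>
  have hab : a ≠ b := (G.mem_edgeSet.mp he).ne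
  have ha := h a (by simp)
  have hb := h b (by simp)
  simp only [edgeVertexDist, Sym2.lift_mk] at ha hb
  rw [G.dist_self] at ha hb
  have ha' : min (G.dist c a) (G.dist d a) = 0 := by omega
  have hb' : min (G.dist c b) (G.dist d b) = 0 := by omega
  have hca : c = a ∨ d = a := by
    rcases Nat.min_eq_zero_iff.mp ha' with h0 | h0
    · exact Or.inl (hG.dist_eq_zero_iff.mp h0)
    · exact Or.inr (hG.dist_eq_zero_iff.mp h0)
  have hcb : c = b ∨ d = b := by
    rcases Nat.min_eq_zero_iff.mp hb' with h0 | h0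
    · exact Or.inl (hG.dist_eq_zero_iff.mp h0)
    · exact Or.inr (hG.dist_eq_zero_iff.mp h0)
  rw [Sym2.eq_iff]
  rcases hca with rfl | rfl <;> rcases hcb with h1 | h1 <;> tauto


/-- If `G` is connected with edge metric dimension `k` and `H` is a subgraph of `G`
with diameter `D` (measured within `H`), then `|E(H)| ≤ (D+1)^k`. -/
theorem stmt_2 {V : Type*} [Fintype V] (G : SimpleGraph V) (hG : G.Connected)
    (k : ℕ) (hk : edgeMetricDim G = k) (H : G.Subgraph) (D : ℕ)
    (hHconn : H.coe.Connected) (hHdiam : ∀ u v : H.verts, H.coe.dist u v ≤ D) :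
    Nat.card H.edgeSet ≤ (D + 1) ^ k := by
  classical
  -- get a resolving set of size k
  have hne : {k | ∃ S : Finset V, S.card = k ∧ IsEdgeResolvingSet G (S : Set V)}.Nonempty :=
    ⟨(Finset.univ : Finset V).card, Finset.univ, rfl, univ_isEdgeResolvingSet G hG⟩
  have hmem := Nat.sInf_mem hne
  rw [show sInf {k | ∃ S : Finset V, S.card = k ∧ IsEdgeResolvingSet G (S : Set V)}
      = edgeMetricDim G from rfl, hk] at hmem
  obtain ⟨S, hScard, hSres⟩ := hmem
  -- trivial case: no edges
  rcases Set.eq_empty_or_nonempty H.edgeSet with hE | hE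
  · simp [hE]
  -- distance in G between vertices of H is at most D
  have hdistD : ∀ a ∈ H.verts, ∀ c ∈ H.verts, G.dist a c ≤ D := by
    intro a ha c hc
    obtain ⟨p, hp⟩ := (hHconn ⟨a, ha⟩ ⟨c, hc⟩).exists_walk_length_eq_dist
    calc G.dist a c ≤ (p.map H.hom).length := G.dist_le _
      _ = p.length := p.length_map _
      _ ≤ D := hp ▸ hHdiam _ _
  -- endpoints of H-edges are H-vertices, via the lift:
  have key : ∀ e ∈ H.edgeSet, ∀ f ∈ H.edgeSet, ∀ s : V,
      edgeVertexDist G e s ≤ edgeVertexDist G f s + D := by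
    intro e he f hf s
    induction e using Sym2.ind with | _ a b =>
    induction f using Sym2.ind with | _ c d =>
    have ha : a ∈ H.verts := (SimpleGraph.Subgraph.mem_edgeSet.mp he).fst_mem
    have hc : c ∈ H.verts := (SimpleGraph.Subgraph.mem_edgeSet.mp hf).fst_mem
    have hd : d ∈ H.verts := (SimpleGraph.Subgraph.mem_edgeSet.mp hf).snd_mem
    simp only [edgeVertexDist, Sym2.lift_mk]
    have t1 : G.dist a s ≤ G.dist a c + G.dist c s := hG.dist_triangle
    have t2 : G.dist a s ≤ G.dist a d + G.dist d s := hG.dist_triangle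
    have := hdistD a ha c hc
    have := hdistD a ha d hd
    omega
  -- the minimum distance to s over edges of H
  set m : V → ℕ := fun s => sInf ((fun e => edgeVertexDist G e s) '' H.edgeSet) with hm
  have hm_le : ∀ s : V, ∀ e ∈ H.edgeSet, m s ≤ edgeVertexDist G e s := by
    intro s e he
    exact Nat.sInf_le ⟨e, he, rfl⟩
  have hle_m : ∀ s : V, ∀ e ∈ H.edgeSet, edgeVertexDist G e s ≤ m s + D := by
    intro s e he
    obtain ⟨f, hf, hfeq⟩ := Nat.sInf_mem (hE.image (fun e => edgeVertexDist G e s))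
    have h2 := key e he f hf s
    have hfeq' : edgeVertexDist G f s = m s := hfeq
    simp only [hm] at hfeq' ⊢
    omega
  -- the injection
  set F : H.edgeSet → (S → Fin (D + 1)) := fun e s =>
    ⟨edgeVertexDist G e.1 s.1 - m s.1, by
      have h1 := hm_le s.1 e.1 e.2
      have h2 := hle_m s.1 e.1 e.2
      omega⟩ with hF
  have hFinj : Function.Injective F := by
    intro e f hEf
    have : ∀ s ∈ (S : Set V), edgeVertexDist G e.1 s = edgeVertexDist G f.1 s := by
      intro s hs
      have := congrFun hEf ⟨s, hs⟩
      have h1 := hm_le s e.1 e.2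
      have h2 := hm_le s f.1 f.2
      simp only [hF, Fin.mk.injEq] at this
      omega
    exact Subtype.ext (hSres e.1 (H.edgeSet_subset e.2) f.1 (H.edgeSet_subset f.2) this)
  calc Nat.card H.edgeSet ≤ Nat.card (S → Fin (D + 1)) :=
        Nat.card_le_card_of_injective F hFinj
    _ = (D + 1) ^ k := by
        rw [Nat.card_fun]
        simp [hScard]
end

section
/- For every positive integer k, there exists a connected graph G with metric dimension exactly k that contains the complete graph K_{2^k} as a subgraph. Concretely: take a clique on vertex set {0,1}^k, add k new vertices u_1,...,u_k, and join u_i to each clique vertex v whose i-th coordinate is 0; then {u_1,...,u_k} is a resolving set, and since the graph contains K_{2^k}, its metric dimension is exactly k. -/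
open SimpleGraph Finset

/-!
Within a clique, the distances to any fixed vertex `s` take at most two consecutive values,
so a resolving set `S` separates at most `2 ^ #S` clique vertices; hence a graph containing
`K_{2^k}` has metric dimension at least `k`. In `cubeCliqueGraph k` the `k` extra vertices
`u_i` resolve everything: a clique vertex `v` is at distance `1` from `u_i` exactly when
`v i = false`, so the distances to the `u_i` read off `v`.
-/

section General

variable {V : Type*} {G : SimpleGraph V}

lemma SimpleGraph.IsClique.dist_le_dist_add_one {C : Set V} (hC : G.IsClique C) {v w : V}
    (hv : v ∈ C) (hw : w ∈ C) (u : V) : G.dist v u ≤ G.dist w u + 1 := by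
  obtain rfl | hvw := eq_or_ne v w
  · omega
  have hadj := hC hv hw hvw
  simpa [dist_eq_one_iff_adj.mpr hadj, add_comm] using hadj.reachable.dist_triangle_left u

theorem IsResolvingSet.card_le_two_pow_of_isClique {S C : Finset V}
    (hS : IsResolvingSet G (S : Set V)) (hC : G.IsClique (C : Set V)) : #C ≤ 2 ^ #S := by
  classical
  -- `v` is coded by which `s` it is farther from than the nearest clique vertex.
  let code : V → S → Bool := fun v s => decide (∃ w ∈ C, G.dist w s < G.dist v s)
  have hinj : Set.InjOn code C := by
    intro v hv v' hv' hcode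
    refine hS v v' fun s hs => ?_
    have hs := congrFun hcode ⟨s, hs⟩
    simp only [code, decide_eq_decide] at hs
    by_cases hfar : ∃ w ∈ C, G.dist w s < G.dist v s
    · obtain ⟨w, hw, hlt⟩ := hfar
      obtain ⟨w', hw', hlt'⟩ := hs.mp ⟨w, hw, hlt⟩
      have := hC.dist_le_dist_add_one hv hw' s
      have := hC.dist_le_dist_add_one hv' hw s
      omega
    · have hfar' : ¬∃ w ∈ C, G.dist w s < G.dist v' s := fun h => hfar (hs.mpr h)
      push Not at hfar hfar'
      exact le_antisymm (hfar v' hv') (hfar' v hv)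
  simpa using card_le_card_of_injOn code (fun v _ => mem_univ (code v)) hinj

lemma SimpleGraph.Connected.eq_of_forall_dist_eq (hG : G.Connected) {S : Set V} {x y : V}
    (hx : x ∈ S) (h : ∀ s ∈ S, G.dist x s = G.dist y s) : x = y :=
  (hG.dist_eq_zero_iff.mp ((h x hx).symm.trans dist_self)).symm

theorem metricDim_eq_of_isResolvingSet [Fintype V] {S : Finset V}
    (hS : IsResolvingSet G (S : Set V))
    (hmin : ∀ T : Finset V, IsResolvingSet G (T : Set V) → #S ≤ #T) :
    metricDim G = #S :=
  IsLeast.csInf_eq ⟨⟨S, rfl, hS⟩, by rintro _ ⟨T, rfl, hT⟩; exact hmin T hT⟩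

end General

section CubeClique

variable (k : ℕ)

/-- The clique on `{0,1}^k` with extra vertices `u_i = inr i`, where `u_i` is joined to the
clique vertices with `i`-th coordinate `false`. -/
def cubeCliqueGraph : SimpleGraph ((Fin k → Bool) ⊕ Fin k) where
  Adj x y := match x, y with
    | .inl v, .inl w => v ≠ w
    | .inl v, .inr i => v i = false
    | .inr i, .inl v => v i = false
    | .inr _, .inr _ => False
  symm := ⟨by rintro (v | i) (w | j) h <;> first | exact h | exact Ne.symm h⟩
  loopless := ⟨by rintro (v | i) h; exacts [h rfl, h]⟩

variable {k}

@[simp]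
lemma cubeCliqueGraph_adj_inl_inl {v w : Fin k → Bool} :
    (cubeCliqueGraph k).Adj (.inl v) (.inl w) ↔ v ≠ w := Iff.rfl

@[simp]
lemma cubeCliqueGraph_adj_inl_inr {v : Fin k → Bool} {i : Fin k} :
    (cubeCliqueGraph k).Adj (.inl v) (.inr i) ↔ v i = false := Iff.rfl

lemma cubeCliqueGraph_connected : (cubeCliqueGraph k).Connected := by
  have hroot : ∀ x, (cubeCliqueGraph k).Reachable (.inl fun _ => false) x := by
    rintro (v | i)
    · obtain h | h := eq_or_ne (fun _ => false) v
      · rw [h]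
      · exact Adj.reachable h
    · exact Adj.reachable (cubeCliqueGraph_adj_inl_inr.mpr rfl)
  exact (connected_iff _).mpr
    ⟨fun x y => (hroot x).symm.trans (hroot y), ⟨.inl fun _ => false⟩⟩

lemma cubeCliqueGraph_isNClique :
    (cubeCliqueGraph k).IsNClique (2 ^ k) (univ.map .inl) := by
  refine ⟨?_, by simp⟩
  simp only [coe_map, coe_univ, Set.image_univ]
  rintro _ ⟨v, rfl⟩ _ ⟨w, rfl⟩ hvw
  exact cubeCliqueGraph_adj_inl_inl.mpr fun h => hvw (h ▸ rfl)

lemma cubeCliqueGraph_isResolvingSet :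
    IsResolvingSet (cubeCliqueGraph k)
      ((univ.map .inr : Finset ((Fin k → Bool) ⊕ Fin k)) : Set _) := by
  intro x y h
  rcases x with v | i
  · rcases y with v' | j
    · congr 1
      funext i
      have hadj : v i = false ↔ v' i = false := by
        rw [← cubeCliqueGraph_adj_inl_inr, ← cubeCliqueGraph_adj_inl_inr, ← dist_eq_one_iff_adj,
          ← dist_eq_one_iff_adj, h (.inr i) (by simp)]
      simpa using hadj
    · exact (cubeCliqueGraph_connected.eq_of_forall_dist_eq (by simp)
        fun s hs => (h s hs).symm).symm
  · exact cubeCliqueGraph_connected.eq_of_forall_dist_eq (by simp) h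

lemma le_card_of_isResolvingSet_cubeCliqueGraph {T : Finset ((Fin k → Bool) ⊕ Fin k)}
    (hT : IsResolvingSet (cubeCliqueGraph k) (T : Set _)) : k ≤ #T := by
  have h := hT.card_le_two_pow_of_isClique cubeCliqueGraph_isNClique.isClique
  rw [cubeCliqueGraph_isNClique.card_eq] at h
  exact (Nat.pow_le_pow_iff_right (by norm_num)).mp h

end CubeClique

theorem stmt_4_general (k : ℕ) :
    ∃ (V : Type) (_ : Fintype V) (G : SimpleGraph V),
      G.Connected ∧ metricDim G = k ∧ ∃ s : Finset V, G.IsNClique (2 ^ k) s := by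
  refine ⟨_, inferInstance, cubeCliqueGraph k, cubeCliqueGraph_connected, ?_,
    _, cubeCliqueGraph_isNClique⟩
  calc metricDim (cubeCliqueGraph k)
      = #(univ.map (Function.Embedding.inr : Fin k ↪ (Fin k → Bool) ⊕ Fin k)) :=
        metricDim_eq_of_isResolvingSet cubeCliqueGraph_isResolvingSet fun _ hT => by
          simpa using le_card_of_isResolvingSet_cubeCliqueGraph hT
    _ = k := by simp

/-- For every `k ≥ 1` there is a connected graph with metric dimension exactly `k`
containing `K_{2^k}` as a subgraph. -/
theorem stmt_4 (k : ℕ) (hk : 1 ≤ k) :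
    ∃ (V : Type) (_ : Fintype V) (G : SimpleGraph V),
      G.Connected ∧ metricDim G = k ∧ ∃ s : Finset V, G.IsNClique (2 ^ k) s :=
  stmt_4_general k
end

section
/- For every positive integer k, there exists a connected graph with metric dimension at most k containing the star K_{1,n} as a subgraph with n ≥ 3^k - k - 1. -/
open SimpleGraph Finset

/-!
The graph is the king graph on the ternary strings `{0,1,2}^k` (two distinct strings are adjacent
when they differ by at most one in every digit), together with landmarks `s_i` joined to the
strings whose `i`-th digit is `0`. Every string `x` is at distance `x i + 1` from `s_i`: lowering
the `i`-th digit one step at a time gives a walk of that length, and no edge changes the potential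
`x ↦ x i + 1` by more than one. Hence the landmarks resolve the graph, and the string `11…1` is
adjacent to all other `3^k - 1 ≥ 3^k - k - 1` strings; unlike the star construction, no leaf has
to be deleted.
-/

namespace SimpleGraph

variable {V : Type*} {G : SimpleGraph V} {φ : V → ℕ}

theorem Walk.le_add_length (hφ : ∀ u v, G.Adj u v → φ u ≤ φ v + 1) :
    ∀ {u v : V} (p : G.Walk u v), φ u ≤ φ v + p.length
  | _, _, .nil => by simp
  | _, _, .cons h p => by
    have := hφ _ _ h
    have := p.le_add_length hφ
    rw [Walk.length_cons]
    omega

theorem exists_walk_length_le_of_descent {t : V}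
    (hdesc : ∀ v ≠ t, ∃ w, G.Adj v w ∧ φ w + 1 = φ v) (v : V) :
    ∃ p : G.Walk v t, p.length ≤ φ v := by
  induction hv : φ v using Nat.strong_induction_on generalizing v with
  | _ n ih =>
    by_cases hvt : v = t
    · subst hvt
      exact ⟨.nil, by simp⟩
    · obtain ⟨w, hvw, hw⟩ := hdesc v hvt
      obtain ⟨p, hp⟩ := ih (φ w) (by omega) w rfl
      exact ⟨.cons hvw p, by rw [Walk.length_cons]; omega⟩

theorem dist_eq_of_descent {t : V} (ht : φ t = 0) (hφ : ∀ u v, G.Adj u v → φ u ≤ φ v + 1)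
    (hdesc : ∀ v ≠ t, ∃ w, G.Adj v w ∧ φ w + 1 = φ v) (v : V) : G.dist v t = φ v := by
  obtain ⟨p, hp⟩ := exists_walk_length_le_of_descent hdesc v
  obtain ⟨q, hq⟩ := Reachable.exists_walk_length_eq_dist ⟨p⟩
  have := q.le_add_length hφ
  have := dist_le p
  omega

end SimpleGraph

theorem metricDim_le_card {V : Type*} {G : SimpleGraph V} {S : Finset V}
    (hS : IsResolvingSet G (S : Set V)) : metricDim G ≤ S.card :=
  Nat.sInf_le ⟨S, rfl, hS⟩

namespace TernaryKing

variable {k : ℕ}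

def IsNear (x y : Fin k → Fin 3) : Prop :=
  ∀ i, (x i : ℕ) ≤ y i + 1 ∧ (y i : ℕ) ≤ x i + 1

/-- `inl i` is the landmark `s_i`, `inr x` the string `x`. -/
def rel (k : ℕ) : Fin k ⊕ (Fin k → Fin 3) → Fin k ⊕ (Fin k → Fin 3) → Prop
  | .inl i, .inr x => x i = 0
  | .inr x, .inr y => IsNear x y
  | _, _ => False

def graph (k : ℕ) : SimpleGraph (Fin k ⊕ (Fin k → Fin 3)) := fromRel (rel k)

def center (k : ℕ) : Fin k → Fin 3 := fun _ => 1

theorem graph_adj_center {x : Fin k → Fin 3} (hx : x ≠ center k) :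
    (graph k).Adj (.inr (center k)) (.inr x) := by
  refine (fromRel_adj _ _ _).2 ⟨by simpa [eq_comm] using hx, Or.inl fun i => ?_⟩
  simp only [center, Fin.isValue, Fin.val_one]
  omega

theorem graph_connected : (graph k).Connected := by
  have reach (x : Fin k → Fin 3) : (graph k).Reachable (.inr (center k)) (.inr x) := by
    by_cases hx : x = center k
    · rw [hx]
    · exact (graph_adj_center hx).reachable
  rw [connected_iff_exists_forall_reachable]
  refine ⟨.inr (center k), ?_⟩
  rintro (i | x)
  · refine (reach fun _ => 0).trans (Adj.reachable ?_)
    exact (fromRel_adj _ _ _).2 ⟨by simp, Or.inr rfl⟩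
  · exact reach x

def landmarkDist (i : Fin k) : Fin k ⊕ (Fin k → Fin 3) → ℕ
  | .inl j => if j = i then 0 else 2
  | .inr x => x i + 1

theorem landmarkDist_le_of_adj (i : Fin k) (u v : Fin k ⊕ (Fin k → Fin 3))
    (huv : (graph k).Adj u v) : landmarkDist i u ≤ landmarkDist i v + 1 := by
  rw [graph, fromRel_adj] at huv
  obtain ⟨-, huv⟩ := huv
  rcases u with j | x <;> rcases v with j' | y <;>
    simp only [rel, IsNear, or_false, false_or, or_self] at huv <;> simp only [landmarkDist]
  · split_ifs <;> omega
  · split_ifs with hj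
    · subst hj
      simp [huv]
    · have := (x i).isLt
      omega
  · rcases huv with h | h <;> have := h i <;> omega

theorem exists_adj_landmarkDist_succ (i : Fin k) (v : Fin k ⊕ (Fin k → Fin 3))
    (hv : v ≠ .inl i) : ∃ w, (graph k).Adj v w ∧ landmarkDist i w + 1 = landmarkDist i v := by
  rcases v with j | x
  · refine ⟨.inr fun _ => 0, (fromRel_adj _ _ _).2 ⟨by simp, Or.inl rfl⟩, ?_⟩
    simp [landmarkDist, show j ≠ i by simpa using hv]
  · by_cases hxi : x i = 0
    · exact ⟨.inl i, (fromRel_adj _ _ _).2 ⟨by simp, Or.inr hxi⟩,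
        by simp [landmarkDist, hxi]⟩
    have hpos : 0 < (x i : ℕ) := Nat.pos_of_ne_zero (Fin.val_ne_iff.2 hxi)
    set y := Function.update x i ⟨x i - 1, by omega⟩
    have hyi : (y i : ℕ) = x i - 1 := by simp [y]
    refine ⟨.inr y, (fromRel_adj _ _ _).2 ⟨?_, Or.inl fun j => ?_⟩, ?_⟩
    · refine Sum.inr_injective.ne fun hxy => ?_
      rw [← hxy] at hyi
      omega
    · by_cases hji : j = i
      · subst hji
        omega
      · simp [y, Function.update_of_ne hji]
    · simp only [landmarkDist]
      omega

theorem dist_inl (i : Fin k) (v : Fin k ⊕ (Fin k → Fin 3)) :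
    (graph k).dist v (.inl i) = landmarkDist i v :=
  dist_eq_of_descent (by simp [landmarkDist]) (landmarkDist_le_of_adj i)
    (exists_adj_landmarkDist_succ i) v

theorem eq_of_landmarkDist_eq {u v : Fin k ⊕ (Fin k → Fin 3)}
    (h : ∀ i, landmarkDist i u = landmarkDist i v) : u = v := by
  rcases u with j | x <;> rcases v with j' | y
  · have := h j
    simp only [landmarkDist, if_true] at this
    split_ifs at this with hj
    exact congrArg _ hj.symm
  · simpa [landmarkDist] using h j
  · simpa [landmarkDist] using h j'
  · exact congrArg _ (funext fun i => Fin.ext (by simpa [landmarkDist] using h i))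

theorem isResolvingSet_landmarks :
    IsResolvingSet (graph k) ((univ.map .inl : Finset (Fin k ⊕ (Fin k → Fin 3))) : Set _) :=
  fun u v h => eq_of_landmarkDist_eq fun i => by
    simpa only [dist_inl] using h (.inl i) (by simp)

end TernaryKing

open TernaryKing in
theorem stmt_8_general (k : ℕ) :
    ∃ (V : Type) (_ : Fintype V) (G : SimpleGraph V),
      G.Connected ∧ metricDim G ≤ k ∧
        ∃ (c : V) (L : Finset V), 3 ^ k - k - 1 ≤ L.card ∧ c ∉ L ∧
          ∀ v ∈ L, G.Adj c v := by
  refine ⟨_, inferInstance, graph k, graph_connected,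
    (metricDim_le_card isResolvingSet_landmarks).trans (by simp), .inr (center k),
    (univ.erase (center k)).map .inr, ?_, by simp, ?_⟩
  · simp only [card_map, card_erase_of_mem (mem_univ _), card_univ,
      Fintype.card_fun, Fintype.card_fin]
    omega
  · simp only [mem_map, mem_erase, Function.Embedding.inr_apply]
    rintro _ ⟨x, ⟨hx, -⟩, rfl⟩
    exact graph_adj_center hx

/-- For every `k ≥ 1` there is a connected graph with metric dimension at most `k`
containing a star `K_{1,n}` with `n ≥ 3^k - k - 1`. -/
theorem stmt_8 (k : ℕ) (hk : 1 ≤ k) :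
    ∃ (V : Type) (_ : Fintype V) (G : SimpleGraph V),
      G.Connected ∧ metricDim G ≤ k ∧
        ∃ (c : V) (L : Finset V), 3 ^ k - k - 1 ≤ L.card ∧ c ∉ L ∧
          ∀ v ∈ L, G.Adj c v :=
  stmt_8_general k
end

section
/- For every positive integer k, there exists a connected graph with edge metric dimension at most 2k that contains K_{n,n} as a subgraph with n = 2^k. -/
open SimpleGraph Finset

/-!
In a connected graph the distance from an edge `e` to a vertex `v` is `0` exactly when `v ∈ e`,
and at most `1` exactly when some endpoint of `e` is adjacent to `v`. So a vertex set resolves the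
edges as soon as these two incidence relations already tell edges apart. In the construction, the
biclique vertex with label `a` on side `s` is adjacent to exactly those added vertices of side `s`
whose index is a zero digit of `a`. Hence a biclique edge is recovered from the added vertices
adjacent to it, and an edge at an added vertex `w` from `w` itself (its unique landmark at
distance `0`) together with the label of its other endpoint.
-/

namespace SimpleGraph

variable {V : Type*} {G : SimpleGraph V}

lemma Connected.dist_le_one_iff (hG : G.Connected) {u v : V} :
    G.dist u v ≤ 1 ↔ u = v ∨ G.Adj u v := by
  rw [Nat.le_one_iff_eq_zero_or_eq_one, hG.dist_eq_zero_iff, dist_eq_one_iff_adj]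

lemma edgeVertexDist_mk (x y v : V) :
    edgeVertexDist G s(x, y) v = min (G.dist x v) (G.dist y v) := rfl

lemma Connected.edgeVertexDist_eq_zero_iff_s12 (hG : G.Connected) (e : Sym2 V) (v : V) :
    edgeVertexDist G e v = 0 ↔ v ∈ e := by
  induction e using Sym2.ind with
  | _ x y =>
    simp only [edgeVertexDist_mk, Nat.min_eq_zero_iff, hG.dist_eq_zero_iff, Sym2.mem_iff,
      eq_comm (a := v)]

lemma Connected.edgeVertexDist_le_one_iff (hG : G.Connected) {e : Sym2 V} (he : e ∈ G.edgeSet)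
    (v : V) : edgeVertexDist G e v ≤ 1 ↔ ∃ x ∈ e, G.Adj x v := by
  induction e using Sym2.ind with
  | _ x y =>
    have hxy : G.Adj x y := he
    simp only [edgeVertexDist_mk, min_le_iff, hG.dist_le_one_iff, Sym2.mem_iff,
      exists_eq_or_imp, exists_eq_left]
    constructor
    · rintro ((rfl | h) | (rfl | h)) <;> simp_all [hxy.symm]
    · tauto

theorem Connected.isEdgeResolvingSet_of_incidence (hG : G.Connected) {S : Set V}
    (h : ∀ e ∈ G.edgeSet, ∀ f ∈ G.edgeSet, (∀ s ∈ S, s ∈ e ↔ s ∈ f) →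
      (∀ s ∈ S, (∃ x ∈ e, G.Adj x s) ↔ ∃ x ∈ f, G.Adj x s) → e = f) :
    IsEdgeResolvingSet G S := by
  intro e he f hf hdist
  refine h e he f hf (fun s hs => ?_) (fun s hs => ?_)
  · rw [← hG.edgeVertexDist_eq_zero_iff_s12, ← hG.edgeVertexDist_eq_zero_iff_s12, hdist s hs]
  · rw [← hG.edgeVertexDist_le_one_iff he, ← hG.edgeVertexDist_le_one_iff hf, hdist s hs]

lemma edgeMetricDim_le_card {S : Finset V} (hS : IsEdgeResolvingSet G S) :
    edgeMetricDim G ≤ S.card :=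
  Nat.sInf_le ⟨S, rfl, hS⟩

end SimpleGraph

/-- `(s, .inl a)` is the vertex with label `a` on side `s` of `K_{2^k,2^k}`, and `(s, .inr i)` is
`u_i` (for `s = false`) or `r_i` (for `s = true`); the digit `0` is `false`. -/
abbrev CodedBicliqueVertex (k : ℕ) : Type := Bool × ((Fin k → Bool) ⊕ Fin k)

def codedBiclique (k : ℕ) : SimpleGraph (CodedBicliqueVertex k) where
  Adj x y := match x, y with
    | (s, .inl _), (t, .inl _) => s ≠ t
    | (s, .inl a), (t, .inr i) | (s, .inr i), (t, .inl a) => s = t ∧ a i = false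
    | (_, .inr _), (_, .inr _) => False
  symm := ⟨by rintro ⟨s, a | i⟩ ⟨t, b | j⟩ h <;> grind⟩
  loopless := ⟨by rintro ⟨s, a | i⟩ h <;> simp_all⟩

namespace CodedBiclique

variable {k : ℕ} {s t : Bool} {a b : Fin k → Bool} {i j : Fin k}

@[simp] lemma adj_inl_inl : (codedBiclique k).Adj (s, .inl a) (t, .inl b) ↔ s ≠ t := Iff.rfl

@[simp] lemma adj_inl_inr :
    (codedBiclique k).Adj (s, .inl a) (t, .inr i) ↔ s = t ∧ a i = false := Iff.rfl

@[simp] lemma adj_inr_inl :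
    (codedBiclique k).Adj (s, .inr i) (t, .inl a) ↔ s = t ∧ a i = false := Iff.rfl

@[simp] lemma not_adj_inr_inr : ¬ (codedBiclique k).Adj (s, .inr i) (t, .inr j) := id

lemma connected (k : ℕ) : (codedBiclique k).Connected := by
  let zero : Fin k → Bool := fun _ => false
  have h_inl : ∀ s a, (codedBiclique k).Reachable (s, .inl a) (true, .inl zero) := by
    rintro (_ | _) a
    · exact Adj.reachable (by simp)
    · exact (Adj.reachable (v := (false, .inl zero)) (by simp)).trans (Adj.reachable (by simp))
  have h_all : ∀ x, (codedBiclique k).Reachable x (true, .inl zero) := by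
    rintro ⟨s, a | i⟩
    · exact h_inl s a
    · exact (Adj.reachable (v := (s, .inl zero)) (by simp [zero])).trans (h_inl s zero)
  have : Nonempty (CodedBicliqueVertex k) := ⟨(true, .inl zero)⟩
  exact ⟨fun x y => (h_all x).trans (h_all y).symm⟩

lemma mem_edgeSet_cases {e : Sym2 (CodedBicliqueVertex k)} (he : e ∈ (codedBiclique k).edgeSet) :
    (∃ a b, e = s((false, .inl a), (true, .inl b))) ∨
      ∃ s a i, a i = false ∧ e = s((s, .inl a), (s, .inr i)) := by
  induction e using Sym2.ind with
  | _ x y =>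
    rcases x with ⟨_ | _, a | i⟩ <;> rcases y with ⟨_ | _, b | j⟩ <;> simp_all [Sym2.eq_swap]

def landmarks (k : ℕ) : Finset (CodedBicliqueVertex k) :=
  univ.map ((Function.Embedding.refl Bool).prodMap Function.Embedding.inr)

lemma card_landmarks (k : ℕ) : (landmarks k).card = 2 * k := by
  simp [landmarks]

lemma mem_landmarks (s : Bool) (i : Fin k) : ((s, .inr i) : CodedBicliqueVertex k) ∈ landmarks k :=
  mem_map_of_mem _ (mem_univ (s, i))

lemma isEdgeResolvingSet_landmarks (k : ℕ) :
    IsEdgeResolvingSet (codedBiclique k) (landmarks k) := by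
  refine (connected k).isEdgeResolvingSet_of_incidence fun e he f hf hmem hadj => ?_
  replace hmem := fun s i => hmem _ (mem_landmarks (k := k) s i)
  replace hadj := fun s i => hadj _ (mem_landmarks (k := k) s i)
  rcases mem_edgeSet_cases he with ⟨a, b, rfl⟩ | ⟨s, a, i, hai, rfl⟩ <;>
    rcases mem_edgeSet_cases hf with ⟨a', b', rfl⟩ | ⟨s', a', i', hai', rfl⟩
  · have ha : a = a' := funext fun j => by simpa using hadj false j
    have hb : b = b' := funext fun j => by simpa using hadj true j
    rw [ha, hb]
  · simpa using hmem s' i'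
  · simpa using hmem s i
  · obtain ⟨rfl, rfl⟩ : s = s' ∧ i = i' := by simpa using hmem s i
    have ha : a = a' := funext fun j => by simpa using hadj s j
    rw [ha]

def side (k : ℕ) (s : Bool) : Finset (CodedBicliqueVertex k) :=
  univ.map (Function.Embedding.inl.trans (Function.Embedding.sectR s _))

lemma card_side (k : ℕ) (s : Bool) : (side k s).card = 2 ^ k := by
  simp [side]

lemma disjoint_side_false_true (k : ℕ) : Disjoint (side k false) (side k true) := by
  simp [side, Finset.disjoint_left]

lemma adj_of_mem_side_false_of_mem_side_true {x y : CodedBicliqueVertex k}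
    (hx : x ∈ side k false) (hy : y ∈ side k true) : (codedBiclique k).Adj x y := by
  obtain ⟨a, -, rfl⟩ := mem_map.mp hx
  obtain ⟨b, -, rfl⟩ := mem_map.mp hy
  simp

end CodedBiclique

open CodedBiclique in
theorem stmt_12_general (k : ℕ) :
    ∃ (V : Type) (_ : Fintype V) (G : SimpleGraph V),
      G.Connected ∧ edgeMetricDim G ≤ 2 * k ∧
        ∃ A B : Finset V, Disjoint A B ∧ A.card = 2 ^ k ∧ B.card = 2 ^ k ∧
          ∀ a ∈ A, ∀ b ∈ B, G.Adj a b :=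
  ⟨CodedBicliqueVertex k, inferInstance, codedBiclique k, connected k,
    card_landmarks k ▸ edgeMetricDim_le_card (isEdgeResolvingSet_landmarks k),
    side k false, side k true, disjoint_side_false_true k, card_side k false, card_side k true,
    fun _ hx _ hy => adj_of_mem_side_false_of_mem_side_true hx hy⟩

/-- For every `k ≥ 1` there is a connected graph of edge metric dimension at most
`2k` containing `K_{n,n}` with `n = 2^k`. -/
theorem stmt_12 (k : ℕ) (hk : 1 ≤ k) :
    ∃ (V : Type) (_ : Fintype V) (G : SimpleGraph V),
      G.Connected ∧ edgeMetricDim G ≤ 2 * k ∧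
        ∃ A B : Finset V, Disjoint A B ∧ A.card = 2 ^ k ∧ B.card = 2 ^ k ∧
          ∀ a ∈ A, ∀ b ∈ B, G.Adj a b :=
  stmt_12_general k
end

section
/- If G is a connected graph on n vertices with edge metric dimension edim(G) ≥ n-k, then for every set T of k+1 vertices of G there exist two distinct vertices x, y ∈ T with d(x,y) ≤ 2. -/
open SimpleGraph Finset

lemma my_aux2 {V : Type*} {G : SimpleGraph V} {T : Finset V} (hG : G.Connected)
    (hfar : ∀ x ∈ T, ∀ y ∈ T, x ≠ y → ¬ G.dist x y ≤ 2)
    {a b c : V} (hab : G.Adj a b) (hcb : G.Adj c b)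
    (h : ∀ v ∉ T, min (G.dist a v) (G.dist b v) = min (G.dist c v) (G.dist b v)) :
    a = c := by
  by_contra hac
  have ha : a ∈ T := by
    by_contra haT
    have h0 : min (G.dist c a) (G.dist b a) = 0 := by
      simpa [SimpleGraph.dist_self] using (h a haT).symm
    rcases Nat.min_eq_zero_iff.mp h0 with h1 | h1
    · exact hac (hG.dist_eq_zero_iff.mp h1).symm
    · exact hab.ne (hG.dist_eq_zero_iff.mp h1).symm
  have hc : c ∈ T := by
    by_contra hcT
    have h0 : min (G.dist a c) (G.dist b c) = 0 := by
      simpa [SimpleGraph.dist_self] using h c hcT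
    rcases Nat.min_eq_zero_iff.mp h0 with h1 | h1
    · exact hac (hG.dist_eq_zero_iff.mp h1)
    · exact hcb.ne (hG.dist_eq_zero_iff.mp h1).symm
  refine hfar a ha c hc hac ?_
  calc G.dist a c ≤ G.dist a b + G.dist b c := hG.dist_triangle
    _ ≤ 2 := by
        rw [SimpleGraph.dist_eq_one_iff_adj.mpr hab,
          SimpleGraph.dist_eq_one_iff_adj.mpr hcb.symm]

lemma my_aux1 {V : Type*} {G : SimpleGraph V} {T : Finset V} (hG : G.Connected)
    (hfar : ∀ x ∈ T, ∀ y ∈ T, x ≠ y → ¬ G.dist x y ≤ 2)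
    {a b c d : V} (hab : G.Adj a b) (hcd : G.Adj c d) (hb : b ∉ T)
    (h : ∀ v ∉ T, min (G.dist a v) (G.dist b v) = min (G.dist c v) (G.dist d v)) :
    s(a, b) = s(c, d) := by
  have h0 : min (G.dist c b) (G.dist d b) = 0 := by
    have := (h b hb).symm
    simpa [SimpleGraph.dist_self] using this
  rcases Nat.min_eq_zero_iff.mp h0 with h1 | h1
  · -- c = b
    have hc : c = b := hG.dist_eq_zero_iff.mp h1
    subst hc
    have h' : ∀ v ∉ T, min (G.dist a v) (G.dist c v) = min (G.dist d v) (G.dist c v) := by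
      intro v hv
      rw [h v hv, min_comm]
    have := my_aux2 hG hfar hab hcd.symm h'
    subst this
    exact Sym2.eq_swap
  · -- d = b
    have hd : d = b := hG.dist_eq_zero_iff.mp h1
    subst hd
    have := my_aux2 hG hfar hab hcd h
    subst this
    rfl

lemma my_key {V : Type*} [Fintype V] [DecidableEq V] {G : SimpleGraph V} (hG : G.Connected)
    {T : Finset V} (hfar : ∀ x ∈ T, ∀ y ∈ T, x ≠ y → ¬ G.dist x y ≤ 2) :
    IsEdgeResolvingSet G ((Tᶜ : Finset V) : Set V) := by
  intro e he f hf h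
  induction e using Sym2.ind with | _ a b =>
  induction f using Sym2.ind with | _ c d =>
  rw [SimpleGraph.mem_edgeSet] at he hf
  have h' : ∀ v ∉ T, min (G.dist a v) (G.dist b v) = min (G.dist c v) (G.dist d v) := by
    intro v hv
    have := h v (by simpa using hv)
    simpa [edgeVertexDist] using this
  by_cases hb : b ∈ T
  · by_cases hat : a ∈ T
    · exact absurd (by rw [SimpleGraph.dist_eq_one_iff_adj.mpr he]; norm_num)
        (hfar a hat b hb he.ne)
    · have h'' : ∀ v ∉ T, min (G.dist b v) (G.dist a v) = min (G.dist c v) (G.dist d v) := by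
        intro v hv; rw [min_comm]; exact h' v hv
      have := my_aux1 hG hfar he.symm hf hat h''
      rw [← this]
      exact Sym2.eq_swap
  · exact my_aux1 hG hfar he hf hb h'

/-- If `G` is a connected graph on `n` vertices with `edim(G) ≥ n - k`, then among
any `k+1` vertices some two are at distance at most `2`. -/
theorem stmt_18 {V : Type*} [Fintype V] (G : SimpleGraph V) (hG : G.Connected)
    (k : ℕ) (hk : Fintype.card V - k ≤ edgeMetricDim G)
    (T : Finset V) (hT : T.card = k + 1) :
    ∃ x ∈ T, ∃ y ∈ T, x ≠ y ∧ G.dist x y ≤ 2 := by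
  classical
  by_contra hcon
  push_neg at hcon
  have hfar : ∀ x ∈ T, ∀ y ∈ T, x ≠ y → ¬ G.dist x y ≤ 2 := by
    intro x hx y hy hxy hle
    exact absurd hle (by simpa using hcon x hx y hy hxy)
  have hres := my_key hG hfar
  have hmem : (Tᶜ : Finset V).card ∈
      {k | ∃ S : Finset V, S.card = k ∧ IsEdgeResolvingSet G (S : Set V)} :=
    ⟨Tᶜ, rfl, hres⟩
  have hle : edgeMetricDim G ≤ (Tᶜ : Finset V).card := Nat.sInf_le hmem
  have hcard : (Tᶜ : Finset V).card = Fintype.card V - (k + 1) := by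
    rw [Finset.card_compl, hT]
  have hTle : k + 1 ≤ Fintype.card V := hT ▸ T.card_le_univ.trans_eq (Finset.card_univ)
  omega
end

section
/- If G is a connected graph on n vertices with edge metric dimension edim(G) = n-k, then the diameter of G is at most 3k-1. In particular, if edim(G) = n-2, the diameter of G is at most 5. -/
open SimpleGraph Finset

/- ---------- auxiliary lemmas ---------- -/

lemma aux_dist_getVert_right {V : Type*} {G : SimpleGraph V} {u v : V}
    (p : G.Walk u v) (i : ℕ) : G.dist (p.getVert i) v ≤ p.length - i := by
  induction p generalizing i with
  | nil => simp [SimpleGraph.Walk.getVert]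
  | cons h q ih =>
    cases i with
    | zero =>
      simpa using SimpleGraph.dist_le (SimpleGraph.Walk.cons h q)
    | succ i =>
      simpa [SimpleGraph.Walk.getVert_cons_succ] using ih i

lemma aux_dist_getVert_left {V : Type*} {G : SimpleGraph V} (hG : G.Connected) {u v : V}
    (p : G.Walk u v) (i : ℕ) : G.dist u (p.getVert i) ≤ i := by
  induction p generalizing i with
  | nil => simp [SimpleGraph.Walk.getVert, SimpleGraph.dist_self]
  | @cons a b c h q ih =>
    cases i with
    | zero => simp [SimpleGraph.Walk.getVert_zero]
    | succ i =>
      rw [SimpleGraph.Walk.getVert_cons_succ]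
      calc G.dist a (q.getVert i) ≤ G.dist a b + G.dist b (q.getVert i) :=
            hG.dist_triangle
        _ ≤ 1 + i := by
            have h1 : G.dist a b = 1 := SimpleGraph.dist_eq_one_iff_adj.mpr h
            exact Nat.add_le_add (le_of_eq h1) (ih i)
        _ = i + 1 := by omega

/-- One direction of the membership transfer. -/
lemma aux_half {V : Type*} {G : SimpleGraph V} (hG : G.Connected) (U : Set V)
    (H : ∀ x ∈ U, ∀ y ∈ U, x ≠ y → 3 ≤ G.dist x y) {a b c d : V}
    (hab : G.Adj a b) (hcd : G.Adj c d)
    (hmem : ∀ s, s ∉ U → ((s = a ∨ s = b) ↔ (s = c ∨ s = d))) :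
    a = c ∨ a = d := by
  by_cases haU : a ∈ U
  · -- b ∉ U
    have hbU : b ∉ U := by
      intro hbU
      have h3 := H a haU b hbU hab.ne
      rw [SimpleGraph.dist_eq_one_iff_adj.mpr hab] at h3
      omega
    have hb : b = c ∨ b = d := (hmem b hbU).mp (Or.inr rfl)
    -- helper: if b = c, show a = d (or a = c); symmetric for b = d
    rcases hb with hbc | hbd
    · -- b = c, show a = d
      by_cases hdU : d ∈ U
      · right
        by_contra hadne
        have h3 := H a haU d hdU hadne
        have t : G.dist a d ≤ G.dist a b + G.dist b d := hG.dist_triangle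
        rw [SimpleGraph.dist_eq_one_iff_adj.mpr hab] at t
        have hbd1 : G.dist b d = 1 := by
          subst hbc; exact SimpleGraph.dist_eq_one_iff_adj.mpr hcd
        omega
      · have hd : d = a ∨ d = b := (hmem d hdU).mpr (Or.inr rfl)
        rcases hd with hd | hd
        · exact Or.inr hd.symm
        · exfalso; exact hcd.ne' (by rw [hd, hbc])
    · -- b = d, show a = c
      by_cases hcU : c ∈ U
      · left
        by_contra hacne
        have h3 := H a haU c hcU hacne
        have t : G.dist a c ≤ G.dist a b + G.dist b c := hG.dist_triangle
        rw [SimpleGraph.dist_eq_one_iff_adj.mpr hab] at t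
        have hbc1 : G.dist b c = 1 := by
          subst hbd; exact SimpleGraph.dist_eq_one_iff_adj.mpr hcd.symm
        omega
      · have hc : c = a ∨ c = b := (hmem c hcU).mpr (Or.inl rfl)
        rcases hc with hc | hc
        · exact Or.inl hc.symm
        · exfalso; exact hcd.ne (by rw [hc, hbd])
  · exact (hmem a haU).mp (Or.inl rfl)

/-- If the vertices of `U` are pairwise at distance at least 3, then the complement
of `U` is an edge resolving set. -/
lemma aux_spread_resolving {V : Type*} [Fintype V] [DecidableEq V]
    {G : SimpleGraph V} (hG : G.Connected) (U : Finset V)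
    (H : ∀ x ∈ U, ∀ y ∈ U, x ≠ y → 3 ≤ G.dist x y) :
    IsEdgeResolvingSet G ((Finset.univ \ U : Finset V) : Set V) := by
  intro e he f hf hall
  induction e using Sym2.ind with | _ a b =>
  induction f using Sym2.ind with | _ c d =>
  rw [SimpleGraph.mem_edgeSet] at he hf
  have H' : ∀ x ∈ (U : Set V), ∀ y ∈ (U : Set V), x ≠ y → 3 ≤ G.dist x y := by
    intro x hx y hy hxy; exact H x hx y hy hxy
  have hmem : ∀ s, s ∉ (U : Set V) → ((s = a ∨ s = b) ↔ (s = c ∨ s = d)) := by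
    intro s hs
    have hsS : s ∈ ((Finset.univ \ U : Finset V) : Set V) := by
      simp only [Finset.coe_sdiff, Finset.coe_univ, Set.mem_diff, Set.mem_univ, true_and]
      exact hs
    have := hall s hsS
    simp only [edgeVertexDist, Sym2.lift_mk] at this
    constructor
    · intro h
      have h0 : min (G.dist a s) (G.dist b s) = 0 := by
        rcases h with h | h <;> subst h <;> simp [Nat.min_eq_zero_iff]
      rw [this] at h0
      rcases Nat.min_eq_zero_iff.mp h0 with h0 | h0
      · exact Or.inl (hG.dist_eq_zero_iff.mp h0).symm
      · exact Or.inr (hG.dist_eq_zero_iff.mp h0).symm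
    · intro h
      have h0 : min (G.dist c s) (G.dist d s) = 0 := by
        rcases h with h | h <;> subst h <;> simp [Nat.min_eq_zero_iff]
      rw [← this] at h0
      rcases Nat.min_eq_zero_iff.mp h0 with h0 | h0
      · exact Or.inl (hG.dist_eq_zero_iff.mp h0).symm
      · exact Or.inr (hG.dist_eq_zero_iff.mp h0).symm
  have hmem' : ∀ s, s ∉ (U : Set V) → ((s = b ∨ s = a) ↔ (s = d ∨ s = c)) := by
    intro s hs; rw [or_comm, or_comm (a := s = d)]; exact hmem s hs
  have ha := aux_half hG (U : Set V) H' he hf hmem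
  have hb := aux_half hG (U : Set V) H' he.symm hf.symm hmem'
  rw [Sym2.eq_iff]
  rcases ha with ha | ha <;> rcases hb with hb | hb
  · exact Or.inl ⟨ha, hb⟩
  · exact absurd (ha.trans hb.symm) he.ne
  · exact absurd (ha.trans hb.symm) he.ne
  · exact Or.inr ⟨ha, hb⟩

/-- If `G` is a connected graph on `n` vertices with `edim(G) = n - k`, then the
diameter of `G` is at most `3k - 1`; in particular, if `edim(G) = n - 2` then the
diameter is at most `5`. -/
theorem stmt_19 {V : Type*} [Fintype V] (G : SimpleGraph V) (hG : G.Connected) :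
    (∀ k : ℕ, 1 ≤ k → edgeMetricDim G + k = Fintype.card V →
      G.diam ≤ 3 * k - 1) ∧
    (edgeMetricDim G + 2 = Fintype.card V → G.diam ≤ 5) := by
  classical
  have main : ∀ k : ℕ, 1 ≤ k → edgeMetricDim G + k = Fintype.card V →
      G.diam ≤ 3 * k - 1 := by
    intro k hk hcard
    by_contra hdiam
    push_neg at hdiam
    have hdiam' : 3 * k ≤ G.diam := by omega
    have hne : Nonempty V := hG.nonempty
    obtain ⟨u, v, huv⟩ := SimpleGraph.exists_dist_eq_diam (G := G)
    obtain ⟨p, hp⟩ := hG.exists_walk_length_eq_dist u v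
    have hlen : 3 * k ≤ p.length := by rw [hp, huv]; exact hdiam'
    set f : ℕ → V := fun i => p.getVert (3 * i) with hf
    -- distance lower bound
    have hdistlb : ∀ i j : ℕ, i < j → j ≤ k → 3 ≤ G.dist (f i) (f j) := by
      intro i j hij hjk
      have t1 : G.dist u (f i) ≤ 3 * i := aux_dist_getVert_left hG p (3 * i)
      have t2 : G.dist (f j) v ≤ p.length - 3 * j := aux_dist_getVert_right p (3 * j)
      have t3 : G.dist u v ≤ G.dist u (f i) + G.dist (f i) (f j) + G.dist (f j) v := by
        calc G.dist u v ≤ G.dist u (f j) + G.dist (f j) v := hG.dist_triangle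
          _ ≤ (G.dist u (f i) + G.dist (f i) (f j)) + G.dist (f j) v :=
              Nat.add_le_add_right hG.dist_triangle _
      have hduv : G.dist u v = p.length := hp.symm
      have h3j : 3 * j ≤ p.length := le_trans (by omega) hlen
      omega
    have hinj : Set.InjOn f ↑(Finset.range (k + 1)) := by
      intro i hi j hj hfij
      simp only [Finset.coe_range, Set.mem_Iio] at hi hj
      by_contra hijne
      rcases Nat.lt_or_ge i j with h | h
      · have := hdistlb i j h (by omega)
        rw [hfij] at this
        simp [SimpleGraph.dist_self] at this
      · have hji : j < i := by omega
        have := hdistlb j i hji (by omega)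
        rw [hfij] at this
        simp [SimpleGraph.dist_self] at this
    set U : Finset V := (Finset.range (k + 1)).image f with hU
    have hUcard : U.card = k + 1 := by
      rw [hU, Finset.card_image_of_injOn hinj, Finset.card_range]
    have HU : ∀ x ∈ U, ∀ y ∈ U, x ≠ y → 3 ≤ G.dist x y := by
      intro x hx y hy hxy
      rw [hU, Finset.mem_image] at hx hy
      obtain ⟨i, hi, rfl⟩ := hx
      obtain ⟨j, hj, rfl⟩ := hy
      rw [Finset.mem_range] at hi hj
      rcases Nat.lt_or_ge i j with h | h
      · exact hdistlb i j h (by omega)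
      · have hji : j < i := by
          rcases Nat.lt_or_ge j i with h' | h'
          · exact h'
          · exact absurd (by omega : i = j) (fun hij => hxy (by rw [hij]))
        rw [SimpleGraph.dist_comm]
        exact hdistlb j i hji (by omega)
    have hres := aux_spread_resolving hG U HU
    have hcardS : (Finset.univ \ U).card = Fintype.card V - (k + 1) := by
      rw [Finset.card_sdiff_of_subset (Finset.subset_univ U), Finset.card_univ, hUcard]
    have hle : edgeMetricDim G ≤ Fintype.card V - (k + 1) := by
      apply Nat.sInf_le
      exact ⟨Finset.univ \ U, hcardS, hres⟩
    have hnk : k + 1 ≤ Fintype.card V := by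
      rw [← hUcard]
      exact Finset.card_le_card (Finset.subset_univ U)
    omega
  exact ⟨main, main 2 (by norm_num)⟩
end
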